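/- The map φ is an involution on colored ribbons with n cells and colors in {1,…,r}, and it restricts to a bijection between the set of cycloribbons and the set of anticycloribbons; in particular there are as many anticycloribbons as cycloribbons. -/
import Mathlib


/-!
STATEMENT 1: The map `φ` is an involution on colored ribbons with `n` cells and colors
in `{1,…,r}`, and it restricts to a bijection between the set of cycloribbons and the
set of anticycloribbons; in particular there are as many anticycloribbons as
cycloribbons.

A colored ribbon is a pair `(I, c)` of a composition `I` of `n` and a color word
`c : Fin n → Fin r`.  The map `φ` keeps the color word and rebuilds the ribbon cell by
cell: the step between cells `i` and `i+1` keeps the same direction (right or down,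
i.e. non-descent or descent) when `c i = c (i+1)`, and takes the other direction
otherwise.  Hence `φ` is characterized by: it fixes the color word, and `i` is a
descent of the shape of `φ(I,c)` iff `descPhi I c i` holds.
-/

namespace AKSPaper

/-- `i` (0-indexed, `i+1 < n`) is a descent of the composition `I` of `n`. -/
def descComp {n : ℕ} (I : Composition n) (i : ℕ) : Prop :=
  i + 1 < n ∧ ∃ k ∈ Finset.range (n + 1), (I.blocks.take k).sum = i + 1

/-- `[I, c]` is a cycloribbon: weakly increasing along rows, weakly decreasing down
columns. -/
def IsCycloribbon {n r : ℕ} (I : Composition n) (c : Fin n → Fin r) : Prop :=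
  ∀ (i : ℕ) (h : i + 1 < n),
    (descComp I i → c ⟨i + 1, h⟩ ≤ c ⟨i, by omega⟩) ∧
    (¬ descComp I i → c ⟨i, by omega⟩ ≤ c ⟨i + 1, h⟩)

/-- `[I, c]` is an anticycloribbon: weakly decreasing along rows, weakly increasing
down columns. -/
def IsAnticycloribbon {n r : ℕ} (I : Composition n) (c : Fin n → Fin r) : Prop :=
  ∀ (i : ℕ) (h : i + 1 < n),
    (descComp I i → c ⟨i, by omega⟩ ≤ c ⟨i + 1, h⟩) ∧
    (¬ descComp I i → c ⟨i + 1, h⟩ ≤ c ⟨i, by omega⟩)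

/-- `i` is a descent of the shape of `φ(I,c)`: the step keeps its direction when the
colors of cells `i` and `i+1` agree and switches it otherwise. -/
def descPhi {n r : ℕ} (I : Composition n) (c : Fin n → Fin r) (i : ℕ) : Prop :=
  ∃ h : i + 1 < n,
    (descComp I i ∧ c ⟨i + 1, h⟩ = c ⟨i, by omega⟩) ∨
    (¬ descComp I i ∧ c ⟨i + 1, h⟩ ≠ c ⟨i, by omega⟩)

/-! ### Auxiliary lemmas -/

lemma mem_boundaries_iff' {n : ℕ} (I : Composition n) (j : Fin (n + 1)) :
    j ∈ I.boundaries ↔ ∃ k ≤ I.length, I.sizeUpTo k = j.1 := by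
  simp only [Composition.boundaries, Finset.mem_map, Finset.mem_univ, true_and]
  constructor
  · rintro ⟨a, rfl⟩
    exact ⟨a, Nat.lt_succ_iff.mp a.2, rfl⟩
  · rintro ⟨k, hk, hkj⟩
    exact ⟨⟨k, Nat.lt_succ_of_le hk⟩, Fin.ext hkj⟩

lemma descComp_iff_mem {n : ℕ} (I : Composition n) (i : ℕ) (h : i + 1 < n) :
    descComp I i ↔ (⟨i + 1, by omega⟩ : Fin (n + 1)) ∈ I.boundaries := by
  rw [mem_boundaries_iff']
  constructor
  · rintro ⟨-, k, -, hsum⟩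
    by_cases hk : k ≤ I.length
    · exact ⟨k, hk, hsum⟩
    · exfalso
      have := I.sizeUpTo_ofLength_le k (le_of_not_ge hk)
      rw [Composition.sizeUpTo] at this
      omega
  · rintro ⟨k, hk, hsum⟩
    refine ⟨h, k, ?_, hsum⟩
    simp only [Finset.mem_range]
    have := I.length_le
    omega

lemma comp_ext {n : ℕ} (I J : Composition n)
    (h : ∀ i, descComp I i ↔ descComp J i) : I = J := by
  apply (compositionEquiv n).injective
  have hb : I.toCompositionAsSet.boundaries = J.toCompositionAsSet.boundaries := by
    rw [Composition.toCompositionAsSet_boundaries, Composition.toCompositionAsSet_boundaries]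
    ext j
    rcases Nat.eq_zero_or_pos j.1 with h0 | h0
    · have hj : j = 0 := Fin.ext h0
      subst hj
      simp only [mem_boundaries_iff']
      exact iff_of_true ⟨0, Nat.zero_le _, I.sizeUpTo_zero⟩ ⟨0, Nat.zero_le _, J.sizeUpTo_zero⟩
    · rcases eq_or_lt_of_le (Nat.lt_succ_iff.mp j.2) with hn | hn
      · simp only [mem_boundaries_iff']
        exact iff_of_true ⟨I.length, le_rfl, by rw [I.sizeUpTo_length]; omega⟩
          ⟨J.length, le_rfl, by rw [J.sizeUpTo_length]; omega⟩
      · have hj1 : j.1 - 1 + 1 < n := by omega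
        have hjj : j = (⟨j.1 - 1 + 1, by omega⟩ : Fin (n + 1)) := Fin.ext (show j.1 = j.1 - 1 + 1 by omega)
        rw [hjj, ← descComp_iff_mem I _ hj1, ← descComp_iff_mem J _ hj1]
        exact h _
  simp only [compositionEquiv, Equiv.coe_fn_mk]
  exact CompositionAsSet.ext hb

open Classical in
/-- A composition of `n` whose descents are exactly the `i` with `i + 1 < n` and `P i`. -/
noncomputable def compOfPred (n : ℕ) (P : ℕ → Prop) : Composition n :=
  CompositionAsSet.toComposition
    { boundaries := Finset.univ.filter
        (fun j : Fin (n + 1) => j.1 = 0 ∨ j.1 = n ∨ (j.1 < n ∧ P (j.1 - 1)))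
      zero_mem := by simp
      getLast_mem := by simp }

lemma descComp_compOfPred {n : ℕ} (P : ℕ → Prop) (i : ℕ) :
    descComp (compOfPred n P) i ↔ (i + 1 < n ∧ P i) := by
  by_cases h : i + 1 < n
  · rw [descComp_iff_mem _ _ h]
    unfold compOfPred
    rw [CompositionAsSet.toComposition_boundaries]
    simp only [Finset.mem_filter, Finset.mem_univ, true_and]
    constructor
    · rintro (h0 | hn | ⟨-, hp⟩)
      · omega
      · omega
      · simpa using ⟨h, hp⟩
    · rintro ⟨-, hp⟩
      exact Or.inr (Or.inr ⟨h, by simpa using hp⟩)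
  · constructor
    · rintro ⟨h', -⟩; omega
    · rintro ⟨h', -⟩; omega

lemma descPhi_iff {n r : ℕ} (I : Composition n) (c : Fin n → Fin r) (i : ℕ) (h : i + 1 < n) :
    descPhi I c i ↔
      ((descComp I i ∧ c ⟨i + 1, h⟩ = c ⟨i, by omega⟩) ∨
       (¬ descComp I i ∧ c ⟨i + 1, h⟩ ≠ c ⟨i, by omega⟩)) := by
  constructor
  · rintro ⟨h', hq⟩; exact hq
  · intro hq; exact ⟨h, hq⟩

lemma key_iff {r : ℕ} (a b : Fin r) (D D' : Prop)
    (hD' : D' ↔ (D ∧ b = a) ∨ (¬ D ∧ b ≠ a)) :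
    ((D → b ≤ a) ∧ (¬ D → a ≤ b)) ↔ ((D' → a ≤ b) ∧ (¬ D' → b ≤ a)) := by
  by_cases hE : b = a
  · subst hE
    exact iff_of_true ⟨fun _ => le_rfl, fun _ => le_rfl⟩ ⟨fun _ => le_rfl, fun _ => le_rfl⟩
  · have hDD : D' ↔ ¬ D := by tauto
    rw [hDD, not_not, and_comm]

/-- `φ` (the unique map on colored ribbons fixing the color word and transforming
descents by `descPhi`) is an involution exchanging cycloribbons and anticycloribbons;
in particular there are as many anticycloribbons as cycloribbons. -/
theorem phi_involution_cyclo_anticyclo (n r : ℕ) :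
    ∃ φ : Composition n × (Fin n → Fin r) → Composition n × (Fin n → Fin r),
      (∀ R, (φ R).2 = R.2) ∧
      (∀ R (i : ℕ), descComp (φ R).1 i ↔ descPhi R.1 R.2 i) ∧
      Function.Involutive φ ∧
      (∀ R, IsCycloribbon R.1 R.2 ↔ IsAnticycloribbon (φ R).1 (φ R).2) ∧
      Nat.card {p : Composition n × (Fin n → Fin r) // IsCycloribbon p.1 p.2} =
        Nat.card {p : Composition n × (Fin n → Fin r) // IsAnticycloribbon p.1 p.2} := by
  set φ : Composition n × (Fin n → Fin r) → Composition n × (Fin n → Fin r) :=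
    fun R => (compOfPred n (fun i => descPhi R.1 R.2 i), R.2) with hφ
  have hcol : ∀ R, (φ R).2 = R.2 := fun R => rfl
  have hdesc : ∀ R (i : ℕ), descComp (φ R).1 i ↔ descPhi R.1 R.2 i := by
    intro R i
    rw [hφ]
    dsimp only
    rw [descComp_compOfPred]
    constructor
    · rintro ⟨-, hp⟩; exact hp
    · intro hp; exact ⟨hp.1, hp⟩
  have hinv : Function.Involutive φ := by
    intro R
    have h2 : (φ (φ R)).2 = R.2 := rfl
    refine Prod.ext ?_ h2
    apply comp_ext
    intro i
    by_cases h : i + 1 < n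
    · rw [hdesc, hcol, descPhi_iff _ _ _ h, hdesc, descPhi_iff _ _ _ h]
      by_cases hE : R.2 ⟨i + 1, h⟩ = R.2 ⟨i, by omega⟩ <;> tauto
    · constructor
      · intro hd
        have := (hdesc (φ R) i).mp hd
        obtain ⟨h', -⟩ := this
        omega
      · rintro ⟨h', -⟩; omega
  have hiff : ∀ R, IsCycloribbon R.1 R.2 ↔ IsAnticycloribbon (φ R).1 (φ R).2 := by
    intro R
    unfold IsCycloribbon IsAnticycloribbon
    refine forall_congr' fun i => forall_congr' fun h => ?_
    have hD' : descComp (φ R).1 i ↔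
        (descComp R.1 i ∧ R.2 ⟨i + 1, h⟩ = R.2 ⟨i, by omega⟩) ∨
        (¬ descComp R.1 i ∧ R.2 ⟨i + 1, h⟩ ≠ R.2 ⟨i, by omega⟩) := by
      rw [hdesc, descPhi_iff _ _ _ h]
    exact key_iff (R.2 ⟨i, by omega⟩) (R.2 ⟨i + 1, h⟩) (descComp R.1 i) (descComp (φ R).1 i) hD'
  refine ⟨φ, hcol, hdesc, hinv, hiff, ?_⟩
  refine Nat.card_congr ⟨fun p => ⟨φ p.1, (hiff p.1).mp p.2⟩,
    fun q => ⟨φ q.1, ?_⟩, fun p => Subtype.ext (hinv p.1), fun q => Subtype.ext (hinv q.1)⟩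
  have := (hiff (φ q.1))
  rw [hinv q.1] at this
  exact this.mpr q.2

end AKSPaper
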